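/- Distance balancing an [[n, K, d_X, d_Z]] quantum code twice (once on each side, via taking cocomplexes appropriately) with a classical [t, k, d] code with independent checks yields a quantum code with parameters [[Θ(nt + n_X t + n_Z t + t²·(checks)), K·k², d·d_X, d·d_Z]]; in particular if K, d_X, d_Z and the classical code parameters are as above, dimension multiplies by k² and both distances by d. -/
import Mathlib


open Matrix

/-- `S` has minimum Hamming weight `d`. -/
def isMinWt {Q : Type*} [Fintype Q] (S : Set (Q → ZMod 2)) (d : ℕ) : Prop :=
  (∀ v ∈ S, d ≤ hammingNorm v) ∧ ∃ v ∈ S, hammingNorm v = d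

/-- Dimension of the CSS code with X-checks `HX` and Z-checks `HZ`:
`dim (ker H_X / im H_Zᵀ)`. -/
noncomputable def qdim {Q X Z : Type*} [Fintype Q] [Fintype X] [Fintype Z]
    (HX : Matrix X Q (ZMod 2)) (HZ : Matrix Z Q (ZMod 2)) : ℕ :=
  Module.finrank (ZMod 2)
    (LinearMap.ker HX.mulVecLin ⧸
      (LinearMap.range HZ.transpose.mulVecLin).comap (LinearMap.ker HX.mulVecLin).subtype)

/-- X-type logical operators: `ker(H_Z) \ im(H_Xᵀ)`. -/
def XLogicals {Q X Z : Type*} [Fintype Q] [Fintype X] [Fintype Z]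
    (HX : Matrix X Q (ZMod 2)) (HZ : Matrix Z Q (ZMod 2)) : Set (Q → ZMod 2) :=
  {v | HZ.mulVec v = 0 ∧ v ∉ Set.range HX.transpose.mulVec}

/-- Z-type logical operators: `ker(H_X) \ im(H_Zᵀ)`. -/
def ZLogicals {Q X Z : Type*} [Fintype Q] [Fintype X] [Fintype Z]
    (HX : Matrix X Q (ZMod 2)) (HZ : Matrix Z Q (ZMod 2)) : Set (Q → ZMod 2) :=
  {v | HX.mulVec v = 0 ∧ v ∉ Set.range HZ.transpose.mulVec}

/-- New X-checks `∂₁ = (H_X ⊗ I ; I ⊗ Hᵀ)` of the distance-balanced code. -/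
def balHX {Q X S T : Type*} (HX : Matrix X Q (ZMod 2))
    (H : Matrix S T (ZMod 2)) [DecidableEq T] [DecidableEq X] :
    Matrix (X × T) ((Q × T) ⊕ (X × S)) (ZMod 2) :=
  Matrix.of fun rj c =>
    match rj, c with
    | (r, j), Sum.inl (p, j') => if j = j' then HX r p else 0
    | (r, j), Sum.inr (r', q) => if r = r' then H q j else 0

/-- New Z-checks `∂₂ᵀ` of the distance-balanced code. -/
def balHZ {Q X Z S T : Type*} (HX : Matrix X Q (ZMod 2)) (HZ : Matrix Z Q (ZMod 2))
    (H : Matrix S T (ZMod 2)) [DecidableEq T] [DecidableEq Q] [DecidableEq S] :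
    Matrix ((Z × T) ⊕ (Q × S)) ((Q × T) ⊕ (X × S)) (ZMod 2) :=
  Matrix.of fun r c =>
    match r, c with
    | Sum.inl (i, j), Sum.inl (p, j') => if j = j' then HZ i p else 0
    | Sum.inl _, Sum.inr _ => 0
    | Sum.inr (p, q), Sum.inl (p', j) => if p = p' then H q j else 0
    | Sum.inr (p, q), Sum.inr (r, q') => if q = q' then HX r p else 0

set_option linter.unusedSectionVars false

open Finset

namespace StmtAux

lemma z2_add_eq_zero_iff (a b : ZMod 2) : a + b = 0 ↔ a = b := by revert a b; decide

lemma z2_add_self (a : ZMod 2) : a + a = 0 := by revert a; decide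

lemma mat_add_eq_zero_iff {α β : Type*} (M N : Matrix α β (ZMod 2)) :
    M + N = 0 ↔ M = N := by
  constructor
  · intro h; ext i j
    have : (M + N) i j = 0 := by rw [h]; rfl
    simpa [z2_add_eq_zero_iff] using this
  · rintro rfl; ext i j; exact z2_add_self _

lemma hn_sum {α β : Type*} [Fintype α] [Fintype β] (f : (α ⊕ β) → ZMod 2) :
    hammingNorm f = hammingNorm (f ∘ Sum.inl) + hammingNorm (f ∘ Sum.inr) := by
  simp [hammingNorm, Finset.card_filter, Fintype.sum_sum_type, Function.comp]

lemma hn_prod {α β : Type*} [Fintype α] [Fintype β] (v : α × β → ZMod 2) :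
    hammingNorm v = ∑ j : β, hammingNorm (fun a => v (a, j)) := by
  simp [hammingNorm, Finset.card_filter, Fintype.sum_prod_type_right]

lemma hn_tensor {α β : Type*} [Fintype α] [Fintype β] (x : α → ZMod 2) (u : β → ZMod 2) :
    hammingNorm (fun pj : α × β => x pj.1 * u pj.2) = hammingNorm x * hammingNorm u := by
  simp only [hammingNorm]
  rw [← Finset.card_product]
  congr 1
  ext ⟨a, b⟩
  simp [mul_ne_zero_iff]

lemma hn_contract_le {α β : Type*} [Fintype α] [Fintype β] (v : α × β → ZMod 2)
    (u : β → ZMod 2) :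
    hammingNorm (fun a => ∑ j : β, v (a, j) * u j) ≤ hammingNorm v := by
  classical
  simp only [hammingNorm]
  calc ({a | (∑ j : β, v (a, j) * u j) ≠ 0} : Finset α).card
      ≤ (({p | v p ≠ 0} : Finset (α × β)).image Prod.fst).card := by
        apply Finset.card_le_card
        intro a ha
        simp only [Finset.mem_filter, Finset.mem_univ, true_and] at ha
        obtain ⟨j, _, hj⟩ := Finset.exists_ne_zero_of_sum_ne_zero ha
        refine Finset.mem_image.2 ⟨(a, j), ?_, rfl⟩
        simp only [Finset.mem_filter, Finset.mem_univ, true_and]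
        exact fun h => hj (by simp [h])
    _ ≤ _ := Finset.card_image_le

lemma sum_cols_le {α β : Type*} [Fintype α] [Fintype β] (v : α × β → ZMod 2) (s : Finset β) :
    ∑ j ∈ s, hammingNorm (fun a => v (a, j)) ≤ hammingNorm v := by
  rw [hn_prod]
  exact Finset.sum_le_sum_of_subset (Finset.subset_univ s)


end StmtAux


-- paste of given defs needed (balHX, balHZ) for testing
namespace StmtAux


variable {Q X Z S T : Type*} [Fintype Q] [Fintype X] [Fintype Z] [Fintype S] [Fintype T]
  [DecidableEq Q] [DecidableEq X] [DecidableEq Z] [DecidableEq S] [DecidableEq T]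

/-- the `Q×T` block of a vector on the balanced qubits, as a matrix -/
def vmat {Q T X S : Type*} (f : (Q × T) ⊕ (X × S) → ZMod 2) : Matrix Q T (ZMod 2) :=
  Matrix.of fun p j => f (Sum.inl (p, j))

/-- the `X×S` block of a vector on the balanced qubits, as a matrix -/
def wmat {Q T X S : Type*} (f : (Q × T) ⊕ (X × S) → ZMod 2) : Matrix X S (ZMod 2) :=
  Matrix.of fun r q => f (Sum.inr (r, q))

variable (M1 : Matrix X Q (ZMod 2)) (M2 : Matrix Z Q (ZMod 2)) (H : Matrix S T (ZMod 2))

lemma balHX_mulVec_apply (f : (Q × T) ⊕ (X × S) → ZMod 2) (r : X) (j : T) :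
    (balHX M1 H).mulVec f (r, j) = (M1 * vmat f) r j + (wmat f * H) r j := by
  simp only [mulVec, dotProduct, Fintype.sum_sum_type, Fintype.sum_prod_type, balHX,
    Matrix.of_apply, mul_apply, vmat, wmat, ite_mul, zero_mul]
  congr 1
  · rw [Finset.sum_comm]
    simp
  · simp [mul_comm]

lemma balHZ_mulVec_apply_inl (f : (Q × T) ⊕ (X × S) → ZMod 2) (i : Z) (j : T) :
    (balHZ M1 M2 H).mulVec f (Sum.inl (i, j)) = (M2 * vmat f) i j := by
  simp only [mulVec, dotProduct, Fintype.sum_sum_type, Fintype.sum_prod_type, balHZ,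
    Matrix.of_apply, mul_apply, vmat, wmat, ite_mul, zero_mul]
  rw [Finset.sum_comm]
  simp

lemma balHZ_mulVec_apply_inr (f : (Q × T) ⊕ (X × S) → ZMod 2) (p : Q) (q : S) :
    (balHZ M1 M2 H).mulVec f (Sum.inr (p, q)) = (vmat f * Hᵀ) p q + (M1ᵀ * wmat f) p q := by
  simp only [mulVec, dotProduct, Fintype.sum_sum_type, Fintype.sum_prod_type, balHZ,
    Matrix.of_apply, mul_apply, vmat, wmat, ite_mul, zero_mul, transpose_apply]
  congr 1
  · simp [mul_comm]
  · rw [Finset.sum_comm]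
    simp [mul_comm]

lemma balHXT_mulVec_apply_inl (c : X × T → ZMod 2) (p : Q) (j : T) :
    (balHX M1 H)ᵀ.mulVec c (Sum.inl (p, j)) = (M1ᵀ * Matrix.of (fun r j => c (r, j))) p j := by
  simp only [mulVec, dotProduct, Fintype.sum_prod_type, balHX, transpose_apply,
    Matrix.of_apply, mul_apply, ite_mul, zero_mul]
  rw [Finset.sum_comm]
  simp [mul_comm]

lemma balHXT_mulVec_apply_inr (c : X × T → ZMod 2) (r : X) (q : S) :
    (balHX M1 H)ᵀ.mulVec c (Sum.inr (r, q)) = (Matrix.of (fun r j => c (r, j)) * Hᵀ) r q := by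
  simp only [mulVec, dotProduct, Fintype.sum_prod_type, balHX, transpose_apply,
    Matrix.of_apply, mul_apply, ite_mul, zero_mul]
  simp [mul_comm]

lemma balHZT_mulVec_apply_inl (g : (Z × T) ⊕ (Q × S) → ZMod 2) (p : Q) (j : T) :
    (balHZ M1 M2 H)ᵀ.mulVec g (Sum.inl (p, j)) =
      (M2ᵀ * vmat g) p j + (wmat g * H) p j := by
  simp only [mulVec, dotProduct, Fintype.sum_sum_type, Fintype.sum_prod_type, balHZ,
    Matrix.of_apply, mul_apply, vmat, wmat, ite_mul, zero_mul, transpose_apply]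
  congr 1
  · rw [Finset.sum_comm]
    simp [mul_comm]
  · simp [mul_comm]

lemma balHZT_mulVec_apply_inr (g : (Z × T) ⊕ (Q × S) → ZMod 2) (r : X) (q : S) :
    (balHZ M1 M2 H)ᵀ.mulVec g (Sum.inr (r, q)) = (M1 * wmat g) r q := by
  simp only [mulVec, dotProduct, Fintype.sum_sum_type, Fintype.sum_prod_type, balHZ,
    Matrix.of_apply, mul_apply, vmat, wmat, ite_mul, zero_mul, transpose_apply]
  rw [Finset.sum_comm]
  simp [mul_comm]



section Char
variable {Q X Z S T : Type*} [Fintype Q] [Fintype X] [Fintype Z] [Fintype S] [Fintype T]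
  [DecidableEq Q] [DecidableEq X] [DecidableEq Z] [DecidableEq S] [DecidableEq T]
variable (M1 : Matrix X Q (ZMod 2)) (M2 : Matrix Z Q (ZMod 2)) (H : Matrix S T (ZMod 2))

lemma mem_ker_balHX_iff (f : (Q × T) ⊕ (X × S) → ZMod 2) :
    (balHX M1 H).mulVec f = 0 ↔ M1 * vmat f = wmat f * H := by
  rw [← mat_add_eq_zero_iff]
  constructor
  · intro h; ext r j
    have h1 := congrFun h (r, j)
    rw [balHX_mulVec_apply] at h1
    simpa using h1
  · intro h; funext rj
    obtain ⟨r, j⟩ := rj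
    rw [balHX_mulVec_apply]
    have h1 : (M1 * vmat f + wmat f * H) r j = (0 : Matrix X T (ZMod 2)) r j := by rw [h]
    simpa using h1

lemma mem_ker_balHZ_iff (f : (Q × T) ⊕ (X × S) → ZMod 2) :
    (balHZ M1 M2 H).mulVec f = 0 ↔ M2 * vmat f = 0 ∧ vmat f * Hᵀ + M1ᵀ * wmat f = 0 := by
  constructor
  · intro h
    constructor
    · ext i j
      have h1 := congrFun h (Sum.inl (i, j))
      rw [balHZ_mulVec_apply_inl] at h1
      simpa using h1
    · ext p q
      have h1 := congrFun h (Sum.inr (p, q))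
      rw [balHZ_mulVec_apply_inr] at h1
      simpa using h1
  · rintro ⟨h1, h2⟩
    funext x
    match x with
    | Sum.inl (i, j) =>
      rw [balHZ_mulVec_apply_inl]
      have := Matrix.ext_iff.2 h1 i j
      simpa using this
    | Sum.inr (p, q) =>
      rw [balHZ_mulVec_apply_inr]
      have := Matrix.ext_iff.2 h2 p q
      simpa using this

lemma mem_range_balHXT_iff (f : (Q × T) ⊕ (X × S) → ZMod 2) :
    f ∈ Set.range (balHX M1 H)ᵀ.mulVec ↔
      ∃ c : Matrix X T (ZMod 2), vmat f = M1ᵀ * c ∧ wmat f = c * Hᵀ := by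
  constructor
  · rintro ⟨g, rfl⟩
    refine ⟨Matrix.of fun r j => g (r, j), ?_, ?_⟩
    · ext p j
      exact balHXT_mulVec_apply_inl M1 H g p j
    · ext r q
      exact balHXT_mulVec_apply_inr M1 H g r q
  · rintro ⟨c, hv, hw⟩
    refine ⟨fun rj => c rj.1 rj.2, ?_⟩
    funext x
    match x with
    | Sum.inl (p, j) =>
      rw [balHXT_mulVec_apply_inl]
      exact (Matrix.ext_iff.2 hv p j).symm
    | Sum.inr (r, q) =>
      rw [balHXT_mulVec_apply_inr]
      exact (Matrix.ext_iff.2 hw r q).symm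

lemma mem_range_balHZT_iff (f : (Q × T) ⊕ (X × S) → ZMod 2) :
    f ∈ Set.range (balHZ M1 M2 H)ᵀ.mulVec ↔
      ∃ (a : Matrix Z T (ZMod 2)) (b : Matrix Q S (ZMod 2)),
        vmat f = M2ᵀ * a + b * H ∧ wmat f = M1 * b := by
  constructor
  · rintro ⟨g, rfl⟩
    refine ⟨vmat g, wmat g, ?_, ?_⟩
    · ext p j
      exact balHZT_mulVec_apply_inl M1 M2 H g p j
    · ext r q
      exact balHZT_mulVec_apply_inr M1 M2 H g r q
  · rintro ⟨a, b, hv, hw⟩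
    refine ⟨Sum.elim (fun ij => a ij.1 ij.2) (fun pq => b pq.1 pq.2), ?_⟩
    funext x
    match x with
    | Sum.inl (p, j) =>
      rw [balHZT_mulVec_apply_inl]
      exact (Matrix.ext_iff.2 hv p j).symm
    | Sum.inr (r, q) =>
      rw [balHZT_mulVec_apply_inr]
      exact (Matrix.ext_iff.2 hw r q).symm

lemma matrix_eq_zero_of_mulVec {A B : Type*} [Fintype B] [DecidableEq B]
    (M : Matrix A B (ZMod 2)) (h : ∀ v, M.mulVec v = 0) : M = 0 := by
  ext i j
  have := congrFun (h (Pi.single j 1)) i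
  rw [Matrix.mulVec_single] at this
  simpa using this

lemma bal_chain (hchain : M1 * M2ᵀ = 0) :
    balHX M1 H * (balHZ M1 M2 H)ᵀ = 0 := by
  apply matrix_eq_zero_of_mulVec
  intro g
  rw [← Matrix.mulVec_mulVec]
  set f := (balHZ M1 M2 H)ᵀ.mulVec g with hf
  have hv : vmat f = M2ᵀ * vmat g + wmat g * H := by
    ext p j; exact balHZT_mulVec_apply_inl M1 M2 H g p j
  have hw : wmat f = M1 * wmat g := by
    ext r q; exact balHZT_mulVec_apply_inr M1 M2 H g r q
  have key : M1 * vmat f + wmat f * H = 0 := by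
    rw [hv, hw, Matrix.mul_add, ← Matrix.mul_assoc, hchain, Matrix.zero_mul, zero_add,
      mat_add_eq_zero_iff, Matrix.mul_assoc]
  funext rj
  obtain ⟨r, j⟩ := rj
  rw [balHX_mulVec_apply]
  have := Matrix.ext_iff.2 key r j
  simpa using this

lemma range_le_ker {A B C : Type*} [Fintype A] [Fintype B] [Fintype C]
    (M : Matrix A B (ZMod 2)) (N : Matrix C B (ZMod 2)) (h : M * Nᵀ = 0) :
    LinearMap.range Nᵀ.mulVecLin ≤ LinearMap.ker M.mulVecLin := by
  rintro x ⟨u, rfl⟩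
  simp only [LinearMap.mem_ker, mulVecLin_apply, Matrix.mulVec_mulVec, h, Matrix.zero_mulVec]

end Char


section Dim
set_option synthInstance.maxHeartbeats 400000
open Module LinearMap

variable {A B : Type*} [Fintype A] [Fintype B]

/-- functions on `A × B` all of whose "columns" lie in `U` -/
def colspaceFn (U : Submodule (ZMod 2) (A → ZMod 2)) (B : Type*) [Fintype B] :
    Submodule (ZMod 2) (A × B → ZMod 2) where
  carrier := {f | ∀ b, (fun a => f (a, b)) ∈ U}
  add_mem' := fun hf hg b => U.add_mem (hf b) (hg b)
  zero_mem' := fun b => U.zero_mem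
  smul_mem' := fun c f hf b => U.smul_mem c (hf b)

lemma mem_colspaceFn {U : Submodule (ZMod 2) (A → ZMod 2)} {f : A × B → ZMod 2} :
    f ∈ colspaceFn U B ↔ ∀ b, (fun a => f (a, b)) ∈ U := Iff.rfl

noncomputable def colspaceFnEquiv (U : Submodule (ZMod 2) (A → ZMod 2)) (B : Type*) [Fintype B] :
    colspaceFn U B ≃ₗ[ZMod 2] (B → U) where
  toFun f b := ⟨fun a => f.1 (a, b), f.2 b⟩
  map_add' f g := rfl
  map_smul' c f := rfl
  invFun g := ⟨fun ab => (g ab.2).1 ab.1, fun b => (g b).2⟩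
  left_inv f := rfl
  right_inv g := rfl

lemma finrank_colspaceFn (U : Submodule (ZMod 2) (A → ZMod 2)) (B : Type*) [Fintype B] :
    finrank (ZMod 2) (colspaceFn U B) = finrank (ZMod 2) U * Fintype.card B := by
  rw [(colspaceFnEquiv U B).finrank_eq, Module.finrank_pi_fintype]
  simp [mul_comm]

lemma rank_add_ker (M : Matrix A B (ZMod 2)) :
    M.rank + finrank (ZMod 2) (LinearMap.ker M.mulVecLin) = Fintype.card B := by
  have := LinearMap.finrank_range_add_finrank_ker M.mulVecLin
  rwa [Module.finrank_pi] at this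

lemma qdim_add {X Z : Type*} [Fintype X] [Fintype Z]
    (M1 : Matrix X A (ZMod 2)) (M2 : Matrix Z A (ZMod 2))
    (hle : LinearMap.range M2ᵀ.mulVecLin ≤ LinearMap.ker M1.mulVecLin) :
    qdim M1 M2 + M2ᵀ.rank = finrank (ZMod 2) (LinearMap.ker M1.mulVecLin) := by
  have h1 := Submodule.finrank_quotient_add_finrank
    ((LinearMap.range M2ᵀ.mulVecLin).comap (LinearMap.ker M1.mulVecLin).subtype)
  have h2 : finrank (ZMod 2)
      ((LinearMap.range M2ᵀ.mulVecLin).comap (LinearMap.ker M1.mulVecLin).subtype) =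
      M2ᵀ.rank := (Submodule.comapSubtypeEquivOfLe hle).finrank_eq
  rw [qdim]
  omega

lemma qdim_comm {X Z : Type*} [Fintype X] [Fintype Z]
    (M1 : Matrix X A (ZMod 2)) (M2 : Matrix Z A (ZMod 2)) (hchain : M1 * M2ᵀ = 0) :
    qdim M1 M2 = qdim M2 M1 := by
  have hchain' : M2 * M1ᵀ = 0 := by
    have := congrArg Matrix.transpose hchain
    rwa [Matrix.transpose_mul, Matrix.transpose_transpose, Matrix.transpose_zero] at this
  have e1 := qdim_add M1 M2 (range_le_ker M1 M2 hchain)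
  have e2 := qdim_add M2 M1 (range_le_ker M2 M1 hchain')
  have r1 := rank_add_ker M1
  have r2 := rank_add_ker M2
  have t1 : M2ᵀ.rank = M2.rank := Matrix.rank_transpose M2
  have t2 : M1ᵀ.rank = M1.rank := Matrix.rank_transpose M1
  omega

end Dim


section Surj
variable {S T : Type*} [Fintype S] [Fintype T] [DecidableEq S]

lemma ker_transpose_eq_bot (H : Matrix S T (ZMod 2))
    (hind : LinearIndependent (ZMod 2) (fun i : S => H i)) :
    LinearMap.ker Hᵀ.mulVecLin = ⊥ := by
  rw [LinearMap.ker_eq_bot']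
  intro y hy
  have hy' : Hᵀ.mulVec y = 0 := hy
  have hz : ∑ i, y i • H i = 0 := by
    funext j
    have := congrFun hy' j
    simp only [mulVec, dotProduct, transpose_apply, Pi.zero_apply] at this
    simpa [Finset.sum_apply, mul_comm] using this
  have hzero := Fintype.linearIndependent_iff.1 hind y hz
  funext i
  exact hzero i

lemma rank_eq_card_of_ind (H : Matrix S T (ZMod 2))
    (hind : LinearIndependent (ZMod 2) (fun i : S => H i)) :
    H.rank = Fintype.card S := by
  have h1 := rank_add_ker Hᵀ
  rw [ker_transpose_eq_bot H hind, finrank_bot] at h1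
  rw [← Matrix.rank_transpose]
  omega

lemma surj_of_ind (H : Matrix S T (ZMod 2))
    (hind : LinearIndependent (ZMod 2) (fun i : S => H i)) :
    Function.Surjective H.mulVec := by
  have hr : LinearMap.range H.mulVecLin = ⊤ := by
    apply Submodule.eq_top_of_finrank_eq
    rw [Module.finrank_pi]
    exact rank_eq_card_of_ind H hind
  intro y
  obtain ⟨x, hx⟩ := LinearMap.range_eq_top.1 hr y
  exact ⟨x, hx⟩

end Surj

section KerStruct
set_option synthInstance.maxHeartbeats 800000
set_option maxHeartbeats 1600000
variable {A B C S T : Type*} [Fintype A] [Fintype B] [Fintype C] [Fintype S] [Fintype T]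
  [DecidableEq S] [DecidableEq T] [DecidableEq A] [DecidableEq B]

lemma col_mul {N : Matrix A B (ZMod 2)} {V : Matrix B T (ZMod 2)} (j : T) :
    (fun a => (N * V) a j) = N.mulVec (fun b => V b j) := by
  funext a; simp [mul_apply, mulVec, dotProduct]

lemma mulVec_mem_of_cols {M : Matrix A S (ZMod 2)} {U : Submodule (ZMod 2) (A → ZMod 2)}
    (h : ∀ q, (fun a => M a q) ∈ U) (z : S → ZMod 2) : M.mulVec z ∈ U := by
  have hrw : M.mulVec z = ∑ q, z q • (fun a => M a q) := by
    funext a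
    simp [mulVec, dotProduct, Finset.sum_apply, mul_comm]
  rw [hrw]
  exact Submodule.sum_mem _ fun q _ => U.smul_mem _ (h q)

theorem finrank_balKer (N : Matrix A B (ZMod 2)) (P : Matrix C A (ZMod 2))
    (H : Matrix S T (ZMod 2)) (hPN : P * N = 0) (hH : Function.Surjective H.mulVec)
    (W : Submodule (ZMod 2) (((B × T) ⊕ (A × S)) → ZMod 2))
    (hW : ∀ f, f ∈ W ↔ N * vmat f = wmat f * H ∧ P * wmat f = 0) :
    Module.finrank (ZMod 2) W =
      Module.finrank (ZMod 2) (LinearMap.ker N.mulVecLin) * Fintype.card T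
        + N.rank * Fintype.card S := by
  classical
  set Φ : W →ₗ[ZMod 2] ((A × S) → ZMod 2) :=
    (LinearMap.funLeft (ZMod 2) (ZMod 2) Sum.inr).comp W.subtype with hΦdef
  have hΦapp : ∀ x : W, Φ x = fun aq => (x : ((B × T) ⊕ (A × S)) → ZMod 2) (Sum.inr aq) :=
    fun x => rfl
  have hrn : Module.finrank (ZMod 2) (LinearMap.range Φ)
      + Module.finrank (ZMod 2) (LinearMap.ker Φ) = Module.finrank (ZMod 2) W :=
    LinearMap.finrank_range_add_finrank_ker Φ
  -- the kernel of Φ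
  have hkerW : ∀ x : W, Φ x = 0 → ∀ j : T,
      (fun p => (x : ((B × T) ⊕ (A × S)) → ZMod 2) (Sum.inl (p, j)))
        ∈ LinearMap.ker N.mulVecLin := by
    intro x hx j
    have hw0 : wmat (x : ((B × T) ⊕ (A × S)) → ZMod 2) = 0 := by
      ext r q
      exact congrFun hx (r, q)
    have h1 := ((hW _).1 x.2).1
    rw [hw0, Matrix.zero_mul] at h1
    have h2 : (fun a => (N * vmat ((x : W) : ((B × T) ⊕ (A × S)) → ZMod 2)) a j)
        = N.mulVec (fun p => ((x : W) : ((B × T) ⊕ (A × S)) → ZMod 2) (Sum.inl (p, j))) :=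
      col_mul j
    rw [LinearMap.mem_ker, mulVecLin_apply, ← h2, h1]
    rfl
  let e0 : LinearMap.ker Φ →ₗ[ZMod 2] colspaceFn (LinearMap.ker N.mulVecLin) T :=
    { toFun := fun x => ⟨fun pj => (x : ((B × T) ⊕ (A × S)) → ZMod 2) (Sum.inl pj),
        fun j => hkerW x.1 x.2 j⟩
      map_add' := fun x y => rfl
      map_smul' := fun c x => rfl }
  have he0 : Function.Bijective e0 := by
    constructor
    · intro x y hxy
      ext z
      match z with
      | Sum.inl pj => exact congrFun (congrArg Subtype.val hxy) pj
      | Sum.inr aq =>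
        have hx := congrFun x.2 aq
        have hy := congrFun y.2 aq
        rw [hΦapp] at hx hy
        simp only [Pi.zero_apply] at hx hy
        rw [hx, hy]
    · intro g
      set f : ((B × T) ⊕ (A × S)) → ZMod 2 := Sum.elim (fun pj => g.1 pj) 0 with hfdef
      have hvf : vmat f = Matrix.of fun p j => g.1 (p, j) := rfl
      have hwf : wmat f = 0 := rfl
      have hfW : f ∈ W := by
        rw [hW]
        constructor
        · rw [hwf, Matrix.zero_mul]
          ext a j
          have h2 : (fun a => (N * vmat f) a j) = N.mulVec (fun b => vmat f b j) := col_mul j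
          have h3 : N.mulVec (fun b => vmat f b j) = 0 := by
            have h5 := g.2 j
            rw [LinearMap.mem_ker, mulVecLin_apply] at h5
            exact h5
          have h4 := congrFun (h2.trans h3) a
          simpa using h4
        · rw [hwf, Matrix.mul_zero]
      refine ⟨⟨⟨f, hfW⟩, ?_⟩, ?_⟩
      · rw [LinearMap.mem_ker]
        funext aq
        rfl
      · ext pj
        rfl
  have hker : Module.finrank (ZMod 2) (LinearMap.ker Φ)
      = Module.finrank (ZMod 2) (LinearMap.ker N.mulVecLin) * Fintype.card T := by
    rw [(LinearEquiv.ofBijective e0 he0).finrank_eq, finrank_colspaceFn]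
  -- the range of Φ
  have hrange : LinearMap.range Φ = colspaceFn (LinearMap.range N.mulVecLin) S := by
    apply le_antisymm
    · rintro y ⟨x, rfl⟩
      rw [hΦapp]
      intro q
      obtain ⟨u, hu⟩ := hH (Pi.single q 1)
      set f : ((B × T) ⊕ (A × S)) → ZMod 2 := x.1 with hf
      have hcol : (fun a => f (Sum.inr (a, q))) = (wmat f).mulVec (Pi.single q 1) := by
        rw [Matrix.mulVec_single]
        funext a
        simp [wmat]
      have h1 := ((hW f).1 x.2).1
      rw [hcol, ← hu, Matrix.mulVec_mulVec, ← h1, ← Matrix.mulVec_mulVec]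
      exact ⟨(vmat f).mulVec u, rfl⟩
    · intro g hg
      have hg' : ∀ q, ∃ v, N.mulVec v = fun a => g (a, q) := by
        intro q
        obtain ⟨v, hv⟩ := hg q
        exact ⟨v, hv⟩
      choose xs hxs using hg'
      set Wg : Matrix A S (ZMod 2) := Matrix.of fun a q => g (a, q) with hWg
      have hWgcols : ∀ q, (fun a => Wg a q) ∈ LinearMap.range N.mulVecLin := by
        intro q
        exact ⟨xs q, hxs q⟩
      have hcols : ∀ j, ∃ v, N.mulVec v = fun a => (Wg * H) a j := by
        intro j
        have h2 : (fun a => (Wg * H) a j) = Wg.mulVec (fun q => H q j) := col_mul j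
        have h3 : Wg.mulVec (fun q => H q j) ∈ LinearMap.range N.mulVecLin :=
          mulVec_mem_of_cols hWgcols _
        obtain ⟨v, hv⟩ := h3
        exact ⟨v, by rw [← h2] at hv; exact hv⟩
      choose vcol hvcol using hcols
      set f : ((B × T) ⊕ (A × S)) → ZMod 2 :=
        Sum.elim (fun pj => vcol pj.2 pj.1) g with hfdef
      have hvf : vmat f = Matrix.of fun p j => vcol j p := rfl
      have hwf : wmat f = Wg := rfl
      have hfW : f ∈ W := by
        rw [hW]
        constructor
        · ext a j
          have h2 : (fun a => (N * vmat f) a j) = N.mulVec (fun b => vmat f b j) := col_mul j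
          have h4 := congrFun h2 a
          rw [h4, hwf]
          have h5 : (fun b => vmat f b j) = vcol j := rfl
          rw [h5, hvcol j]
        · ext c q
          have h2 : (fun c' => (P * wmat f) c' q) = P.mulVec (fun a => wmat f a q) := col_mul q
          have h4 := congrFun h2 c
          rw [h4, hwf]
          have h5 : (fun a => Wg a q) = N.mulVec (xs q) := (hxs q).symm
          rw [h5, Matrix.mulVec_mulVec, hPN, Matrix.zero_mulVec]
          rfl
      exact ⟨⟨f, hfW⟩, rfl⟩
  have hrange2 : Module.finrank (ZMod 2) (LinearMap.range Φ) = N.rank * Fintype.card S := by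
    rw [hrange, finrank_colspaceFn]
    rfl
  rw [← hrn, hker, hrange2]
  ring

end KerStruct


section QdimBal
set_option synthInstance.maxHeartbeats 800000
set_option maxHeartbeats 1600000
variable {Q X Z S T : Type*} [Fintype Q] [Fintype X] [Fintype Z] [Fintype S] [Fintype T]
  [DecidableEq Q] [DecidableEq X] [DecidableEq Z] [DecidableEq S] [DecidableEq T]
variable (M1 : Matrix X Q (ZMod 2)) (M2 : Matrix Z Q (ZMod 2)) (H : Matrix S T (ZMod 2))

lemma mem_ker_balHZT_iff (g : (Z × T) ⊕ (Q × S) → ZMod 2) :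
    (balHZ M1 M2 H)ᵀ.mulVec g = 0 ↔ M2ᵀ * vmat g = wmat g * H ∧ M1 * wmat g = 0 := by
  constructor
  · intro h
    refine ⟨?_, ?_⟩
    · rw [← mat_add_eq_zero_iff]
      ext p j
      have h1 := congrFun h (Sum.inl (p, j))
      rw [balHZT_mulVec_apply_inl] at h1
      simpa using h1
    · ext r q
      have h1 := congrFun h (Sum.inr (r, q))
      rw [balHZT_mulVec_apply_inr] at h1
      simpa using h1
  · rintro ⟨h1, h2⟩
    rw [← mat_add_eq_zero_iff] at h1
    funext x
    match x with
    | Sum.inl (p, j) =>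
      rw [balHZT_mulVec_apply_inl]
      have := Matrix.ext_iff.2 h1 p j
      simpa using this
    | Sum.inr (r, q) =>
      rw [balHZT_mulVec_apply_inr]
      have := Matrix.ext_iff.2 h2 r q
      simpa using this

theorem bal_qdim (hchain : M1 * M2ᵀ = 0)
    (hind : LinearIndependent (ZMod 2) (fun i : S => H i)) :
    qdim (balHX M1 H) (balHZ M1 M2 H)
      = qdim M1 M2 * Module.finrank (ZMod 2) (LinearMap.ker H.mulVecLin) := by
  classical
  have hH := surj_of_ind H hind
  have hbalchain := bal_chain M1 M2 H hchain
  have e1 := qdim_add (balHX M1 H) (balHZ M1 M2 H) (range_le_ker _ _ hbalchain)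
  have k1 : Module.finrank (ZMod 2) (LinearMap.ker (balHX M1 H).mulVecLin)
      = Module.finrank (ZMod 2) (LinearMap.ker M1.mulVecLin) * Fintype.card T
        + M1.rank * Fintype.card S := by
    apply finrank_balKer M1 (0 : Matrix Unit X (ZMod 2)) H (Matrix.zero_mul _) hH
    intro f
    rw [LinearMap.mem_ker, mulVecLin_apply, mem_ker_balHX_iff]
    simp [Matrix.zero_mul]
  have k2 : Module.finrank (ZMod 2) (LinearMap.ker ((balHZ M1 M2 H)ᵀ).mulVecLin)
      = Module.finrank (ZMod 2) (LinearMap.ker M2ᵀ.mulVecLin) * Fintype.card T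
        + M2ᵀ.rank * Fintype.card S := by
    apply finrank_balKer M2ᵀ M1 H hchain hH
    intro g
    rw [LinearMap.mem_ker, mulVecLin_apply, mem_ker_balHZT_iff]
  have r2 := rank_add_ker (balHZ M1 M2 H)ᵀ
  have hcard : Fintype.card ((Z × T) ⊕ (Q × S))
      = Fintype.card Z * Fintype.card T + Fintype.card Q * Fintype.card S := by
    simp [Fintype.card_sum, Fintype.card_prod]
  rw [hcard, k2] at r2
  have e0 := qdim_add M1 M2 (range_le_ker M1 M2 hchain)
  have rM1 := rank_add_ker M1
  have rM2T := rank_add_ker M2ᵀ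
  have tM2 : M2ᵀ.rank = M2.rank := Matrix.rank_transpose M2
  have hs : H.rank = Fintype.card S := rank_eq_card_of_ind H hind
  have ht := rank_add_ker H
  rw [hs] at ht
  rw [tM2] at e0 r2 rM2T k2
  rw [k1] at e1
  -- abbreviations
  set D := qdim (balHX M1 H) (balHZ M1 M2 H) with hD
  set K := qdim M1 M2 with hK
  set κ1 := Module.finrank (ZMod 2) (LinearMap.ker M1.mulVecLin) with hκ1
  set κ2 := Module.finrank (ZMod 2) (LinearMap.ker M2ᵀ.mulVecLin) with hκ2
  set k := Module.finrank (ZMod 2) (LinearMap.ker H.mulVecLin) with hk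
  set ρ1 := M1.rank with hρ1
  set ρ2 := M2.rank with hρ2
  set t := Fintype.card T with ht'
  set s := Fintype.card S with hs'
  have big : D + Fintype.card Z * t + Fintype.card Q * s
      = κ1 * t + ρ1 * s + κ2 * t + ρ2 * s := by linarith
  rw [← rM2T, ← rM1, ← e0] at big
  have htk : s + k = t := by omega
  rw [← htk] at big
  ring_nf at big
  linarith
end QdimBal


section Orth
variable {T : Type*} [Fintype T] [DecidableEq T]

lemma z2_ne_zero (a : ZMod 2) (h : a ≠ 0) : a = 1 := by revert a; decide

lemma exists_orth_of_ne_top (W : Submodule (ZMod 2) (T → ZMod 2)) (hW : W ≠ ⊤) :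
    ∃ z : T → ZMod 2, z ≠ 0 ∧ ∀ u ∈ W, ∑ j, u j * z j = 0 := by
  obtain ⟨φ, hφ0, hφ⟩ :=
    Submodule.exists_dual_map_eq_bot_of_lt_top (lt_top_iff_ne_top.2 hW) inferInstance
  set z : T → ZMod 2 := fun j => φ (fun j' => if j = j' then 1 else 0) with hz
  have hform : ∀ u : T → ZMod 2, φ u = ∑ j, u j * z j := by
    intro u
    conv_lhs => rw [pi_eq_sum_univ u]
    rw [map_sum]
    refine Finset.sum_congr rfl fun j _ => ?_
    rw [_root_.map_smul, smul_eq_mul]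
  refine ⟨z, ?_, ?_⟩
  · intro hz0
    apply hφ0
    apply LinearMap.ext
    intro u
    rw [hform, hz0]
    simp
  · intro u hu
    rw [← hform]
    have : φ u ∈ W.map φ := ⟨u, hu, rfl⟩
    rw [hφ] at this
    simpa using this

end Orth




section Dist
set_option synthInstance.maxHeartbeats 800000
set_option maxHeartbeats 3200000
variable {Q X Z S T : Type*} [Fintype Q] [Fintype X] [Fintype Z] [Fintype S] [Fintype T]
  [DecidableEq Q] [DecidableEq X] [DecidableEq Z] [DecidableEq S] [DecidableEq T]
variable (M1 : Matrix X Q (ZMod 2)) (M2 : Matrix Z Q (ZMod 2)) (H : Matrix S T (ZMod 2))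

theorem bal_Xdist (hind : LinearIndependent (ZMod 2) (fun i : S => H i)) {dX d : ℕ}
    (hdX : isMinWt (XLogicals M1 M2) dX)
    (hd : isMinWt {v : T → ZMod 2 | H.mulVec v = 0 ∧ v ≠ 0} d) :
    isMinWt (XLogicals (balHX M1 H) (balHZ M1 M2 H)) (d * dX) := by
  classical
  have hH := surj_of_ind H hind
  choose uu huu using fun q => hH (Pi.single q 1)
  set Um : Matrix T S (ZMod 2) := Matrix.of fun j q => uu q j with hUm
  have hHUm : H * Um = 1 := by
    ext q' q
    have h3 : (H * Um) q' q = H.mulVec (uu q) q' := by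
      simp [mul_apply, mulVec, dotProduct, hUm]
    rw [h3, huu q, Matrix.one_apply, Pi.single_apply]
  constructor
  · -- lower bound
    rintro f ⟨hker, hnr⟩
    rw [mem_ker_balHZ_iff] at hker
    obtain ⟨h1, h2⟩ := hker
    rw [mat_add_eq_zero_iff] at h2
    set V : Matrix Q T (ZMod 2) := vmat f with hV
    set Wm : Matrix X S (ZMod 2) := wmat f with hWm
    set Wsp : Submodule (ZMod 2) (T → ZMod 2) :=
      Submodule.comap V.mulVecLin (LinearMap.range M1ᵀ.mulVecLin) with hWsp
    have hWspmem : ∀ u, u ∈ Wsp ↔ V.mulVec u ∈ LinearMap.range M1ᵀ.mulVecLin := by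
      intro u
      rw [hWsp, Submodule.mem_comap, mulVecLin_apply]
    have hWtop : Wsp ≠ ⊤ := by
      intro htop
      apply hnr
      have hcols : ∀ j, ∃ cj, M1ᵀ.mulVec cj = fun p => V p j := by
        intro j
        have hj : Pi.single j 1 ∈ Wsp := htop ▸ Submodule.mem_top
        rw [hWspmem, Matrix.mulVec_single] at hj
        obtain ⟨y, hy⟩ := hj
        refine ⟨y, ?_⟩
        rw [mulVecLin_apply] at hy
        rw [hy]
        funext p
        simp
      choose c hc using hcols
      set Cm : Matrix X T (ZMod 2) := Matrix.of fun r j => c j r with hCm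
      have hMC : M1ᵀ * Cm = V := by
        ext p j
        have h4 := congrFun (col_mul (N := M1ᵀ) (V := Cm) j) p
        rw [h4]
        have h5 : (fun r => Cm r j) = c j := rfl
        rw [h5, hc j]
      set W' : Matrix X S (ZMod 2) := Wm + Cm * Hᵀ with hW'
      have hW'0 : M1ᵀ * W' = 0 := by
        rw [hW', Matrix.mul_add, ← Matrix.mul_assoc, hMC, h2, mat_add_eq_zero_iff]
      set C' : Matrix X T (ZMod 2) := W' * Umᵀ with hC'
      have hMC' : M1ᵀ * C' = 0 := by
        rw [hC', ← Matrix.mul_assoc, hW'0, Matrix.zero_mul]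
      have hC'H : C' * Hᵀ = W' := by
        rw [hC', Matrix.mul_assoc, ← Matrix.transpose_mul, hHUm, Matrix.transpose_one,
          Matrix.mul_one]
      rw [mem_range_balHXT_iff]
      refine ⟨Cm + C', ?_, ?_⟩
      · rw [Matrix.mul_add, hMC, hMC', add_zero]
      · rw [Matrix.add_mul, hC'H, hW']
        have hxx : Cm * Hᵀ + Cm * Hᵀ = 0 := (mat_add_eq_zero_iff _ _).2 rfl
        rw [add_comm Wm (Cm * Hᵀ), ← add_assoc, hxx, zero_add]
    obtain ⟨z, hz0, hzW⟩ := exists_orth_of_ne_top Wsp hWtop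
    have hzker : H.mulVec z = 0 := by
      funext q
      have hq : Hᵀ.mulVec (Pi.single q 1) ∈ Wsp := by
        rw [hWspmem, Matrix.mulVec_mulVec, h2, ← Matrix.mulVec_mulVec]
        exact ⟨Wm.mulVec (Pi.single q 1), by rw [mulVecLin_apply]⟩
      have h3 := hzW _ hq
      rw [Matrix.mulVec_single] at h3
      simp only [Pi.zero_apply]
      rw [show H.mulVec z q = ∑ j, H q j * z j from rfl]
      rw [← h3]
      refine Finset.sum_congr rfl fun j _ => ?_
      simp [Matrix.transpose_apply]
    have hd1 : d ≤ hammingNorm z := hd.1 z ⟨hzker, hz0⟩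
    have hcols : ∀ j, z j ≠ 0 → (fun p => f (Sum.inl (p, j))) ∈ XLogicals M1 M2 := by
      intro j hj
      refine ⟨?_, ?_⟩
      · have h3 : (fun i => (M2 * V) i j) = M2.mulVec (fun p => V p j) := col_mul j
        have h4 : (fun p => V p j) = fun p => f (Sum.inl (p, j)) := rfl
        rw [← h4, ← h3, h1]
        rfl
      · intro hmem
        obtain ⟨y, hy⟩ := hmem
        have hsing : Pi.single j 1 ∈ Wsp := by
          rw [hWspmem, Matrix.mulVec_single]
          refine ⟨y, ?_⟩
          rw [mulVecLin_apply, hy]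
          funext p
          simp [hV, vmat]
        have h5 := hzW _ hsing
        have h6 : z j = 0 := by
          rw [← h5]
          rw [Finset.sum_eq_single j]
          · rw [Pi.single_apply, if_pos rfl, one_mul]
          · intro b _ hb
            rw [Pi.single_apply, if_neg hb, zero_mul]
          · intro hnotmem
            exact absurd (Finset.mem_univ j) hnotmem
        exact hj h6
    calc d * dX ≤ hammingNorm z * dX := Nat.mul_le_mul_right _ hd1
      _ ≤ ∑ j ∈ Finset.filter (fun j => z j ≠ 0) Finset.univ,
            hammingNorm (fun p => f (Sum.inl (p, j))) := by
          have hle := Finset.card_nsmul_le_sum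
            (Finset.filter (fun j => z j ≠ 0) Finset.univ)
            (fun j => hammingNorm fun p => f (Sum.inl (p, j))) dX
            (fun j hj => hdX.1 _ (hcols j (by simpa using hj)))
          simpa [smul_eq_mul, hammingNorm] using hle
      _ ≤ hammingNorm (fun pj : Q × T => f (Sum.inl pj)) :=
          sum_cols_le (fun pj : Q × T => f (Sum.inl pj)) _
      _ ≤ hammingNorm f := by
          rw [hn_sum f]
          exact Nat.le_add_right _ _
  · -- existence of a minimum-weight logical
    obtain ⟨x0, hx0mem, hx0n⟩ := hdX.2
    obtain ⟨u0, hu0mem, hu0n⟩ := hd.2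
    obtain ⟨hu0ker, hu0ne⟩ := hu0mem
    set f0 : (Q × T) ⊕ (X × S) → ZMod 2 := Sum.elim (fun pj => x0 pj.1 * u0 pj.2) 0 with hf0
    have hvf0 : vmat f0 = Matrix.of fun p j => x0 p * u0 j := rfl
    have hwf0 : wmat f0 = 0 := rfl
    refine ⟨f0, ⟨?_, ?_⟩, ?_⟩
    · rw [mem_ker_balHZ_iff]
      constructor
      · ext i j
        have h3 : (M2 * vmat f0) i j = (M2.mulVec x0) i * u0 j := by
          simp [mul_apply, mulVec, dotProduct, hvf0, Finset.sum_mul, mul_assoc]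
        rw [h3, hx0mem.1]
        simp
      · rw [hwf0, Matrix.mul_zero, add_zero]
        ext p q
        have h3 : (vmat f0 * Hᵀ) p q = x0 p * (H.mulVec u0) q := by
          simp only [mul_apply, mulVec, dotProduct, hvf0, Matrix.of_apply,
            Matrix.transpose_apply, Finset.mul_sum]
          refine Finset.sum_congr rfl fun j _ => ?_
          ring
        rw [h3, hu0ker]
        simp
    · intro hmem
      rw [mem_range_balHXT_iff] at hmem
      obtain ⟨c, hv, hw⟩ := hmem
      obtain ⟨j0, hj0⟩ : ∃ j, u0 j ≠ 0 := by
        by_contra hno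
        push_neg at hno
        exact hu0ne (funext fun j => hno j)
      apply hx0mem.2
      refine ⟨fun r => c r j0, ?_⟩
      have h3 : (fun p => (M1ᵀ * c) p j0) = M1ᵀ.mulVec (fun r => c r j0) := col_mul j0
      rw [← h3, ← hv]
      funext p
      show vmat f0 p j0 = x0 p
      rw [hvf0]
      show x0 p * u0 j0 = x0 p
      rw [z2_ne_zero _ hj0, mul_one]
    · have h4 : hammingNorm f0 = hammingNorm (fun pj : Q × T => x0 pj.1 * u0 pj.2) := by
        rw [hn_sum]
        have h5 : hammingNorm (f0 ∘ Sum.inr) = 0 := by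
          simp [hf0, hammingNorm]
        rw [h5, add_zero]
        rfl
      rw [h4, hn_tensor, hx0n, hu0n, Nat.mul_comm]

theorem bal_Zdist (hind : LinearIndependent (ZMod 2) (fun i : S => H i)) {dZ : ℕ}
    (hdZ : isMinWt (ZLogicals M1 M2) dZ)
    (hex : ∃ u : T → ZMod 2, H.mulVec u = 0 ∧ u ≠ 0) :
    isMinWt (ZLogicals (balHX M1 H) (balHZ M1 M2 H)) dZ := by
  classical
  have hH := surj_of_ind H hind
  choose uu huu using fun q => hH (Pi.single q 1)
  set Um : Matrix T S (ZMod 2) := Matrix.of fun j q => uu q j with hUm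
  have hHUm : H * Um = 1 := by
    ext q' q
    have h3 : (H * Um) q' q = H.mulVec (uu q) q' := by
      simp [mul_apply, mulVec, dotProduct, hUm]
    rw [h3, huu q, Matrix.one_apply, Pi.single_apply]
  constructor
  · rintro f ⟨hker, hnr⟩
    rw [mem_ker_balHX_iff] at hker
    set V : Matrix Q T (ZMod 2) := vmat f with hV
    set Wm : Matrix X S (ZMod 2) := wmat f with hWm
    have hexu : ∃ u, H.mulVec u = 0 ∧ V.mulVec u ∉ Set.range M2ᵀ.mulVec := by
      by_contra hno
      push_neg at hno
      apply hnr
      rw [mem_range_balHZT_iff]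
      set Vb : Matrix Q T (ZMod 2) := V + (V * Um) * H with hVb
      have hVbmul : Vb = V * (1 + Um * H) := by
        rw [hVb, Matrix.mul_add, Matrix.mul_one, Matrix.mul_assoc]
      have hcols : ∀ j, ∃ aj, M2ᵀ.mulVec aj = fun p => Vb p j := by
        intro j
        have hker0 : H.mulVec (fun j' => (1 + Um * H : Matrix T T (ZMod 2)) j' j) = 0 := by
          have h6 : (fun q => (H * (1 + Um * H) : Matrix S T (ZMod 2)) q j)
              = H.mulVec (fun j' => (1 + Um * H : Matrix T T (ZMod 2)) j' j) := col_mul j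
          rw [← h6]
          have h7 : H * (1 + Um * H) = H + H := by
            rw [Matrix.mul_add, Matrix.mul_one, ← Matrix.mul_assoc, hHUm, Matrix.one_mul]
          rw [h7]
          funext q
          exact z2_add_self _
        have hcol : (fun p => Vb p j) = V.mulVec (fun j' => ((1 + Um * H : Matrix T T (ZMod 2)) j' j)) := by
          rw [hVbmul]
          exact col_mul j
        obtain ⟨y, hy⟩ := hno _ hker0
        exact ⟨y, by rw [hy, ← hcol]⟩
      choose aa haa using hcols
      refine ⟨Matrix.of fun i j => aa j i, V * Um, ?_, ?_⟩
      · have hMa : M2ᵀ * (Matrix.of fun i j => aa j i) = Vb := by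
          ext p j
          have h3 := congrFun (col_mul (N := M2ᵀ) (V := Matrix.of fun i j => aa j i) j) p
          rw [h3]
          have h5 : (fun i => (Matrix.of fun i j => aa j i) i j) = aa j := rfl
          rw [h5, haa j]
        rw [hMa, hVb]
        have hxx : (V * Um) * H + (V * Um) * H = 0 := (mat_add_eq_zero_iff _ _).2 rfl
        rw [add_assoc, hxx, add_zero]
      · rw [← Matrix.mul_assoc, hker, Matrix.mul_assoc, hHUm, Matrix.mul_one]
    obtain ⟨u, huker, hunot⟩ := hexu
    have hlog : V.mulVec u ∈ ZLogicals M1 M2 := by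
      refine ⟨?_, hunot⟩
      rw [Matrix.mulVec_mulVec, hker, ← Matrix.mulVec_mulVec, huker, Matrix.mulVec_zero]
    have h1 := hdZ.1 _ hlog
    have h2 : hammingNorm (V.mulVec u) ≤ hammingNorm (fun pj : Q × T => f (Sum.inl pj)) :=
      hn_contract_le (fun pj : Q × T => f (Sum.inl pj)) u
    have h3 : hammingNorm (fun pj : Q × T => f (Sum.inl pj)) ≤ hammingNorm f := by
      rw [hn_sum f]
      exact Nat.le_add_right _ _
    omega
  · obtain ⟨x0, hx0mem, hx0n⟩ := hdZ.2
    obtain ⟨u0, hu0ker, hu0ne⟩ := hex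
    obtain ⟨j0, hj0⟩ : ∃ j, u0 j ≠ 0 := by
      by_contra hno
      push_neg at hno
      exact hu0ne (funext fun j => hno j)
    set e0 : T → ZMod 2 := fun j => if j = j0 then 1 else 0 with he0
    set f0 : (Q × T) ⊕ (X × S) → ZMod 2 := Sum.elim (fun pj => x0 pj.1 * e0 pj.2) 0 with hf0
    have hvf0 : vmat f0 = Matrix.of fun p j => x0 p * e0 j := rfl
    have hwf0 : wmat f0 = 0 := rfl
    refine ⟨f0, ⟨?_, ?_⟩, ?_⟩
    · rw [mem_ker_balHX_iff, hwf0, Matrix.zero_mul]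
      ext r j
      have h3 : (M1 * vmat f0) r j = (M1.mulVec x0) r * e0 j := by
        simp [mul_apply, mulVec, dotProduct, hvf0, Finset.sum_mul, mul_assoc]
      rw [h3, hx0mem.1]
      simp
    · intro hmem
      rw [mem_range_balHZT_iff] at hmem
      obtain ⟨a, b, hv, hw⟩ := hmem
      apply hx0mem.2
      refine ⟨a.mulVec u0, ?_⟩
      have h6 : (vmat f0).mulVec u0 = x0 := by
        funext p
        show ∑ j, vmat f0 p j * u0 j = x0 p
        rw [Finset.sum_eq_single j0]
        · show vmat f0 p j0 * u0 j0 = x0 p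
          rw [hvf0]
          show x0 p * e0 j0 * u0 j0 = x0 p
          rw [he0]
          simp [z2_ne_zero _ hj0]
        · intro b' _ hb
          show vmat f0 p b' * u0 b' = 0
          rw [hvf0]
          show x0 p * e0 b' * u0 b' = 0
          rw [he0]
          simp [hb]
        · intro hnotmem
          exact absurd (Finset.mem_univ j0) hnotmem
      have h7 : (vmat f0).mulVec u0 = M2ᵀ.mulVec (a.mulVec u0) := by
        rw [hv, Matrix.add_mulVec, ← Matrix.mulVec_mulVec, ← Matrix.mulVec_mulVec,
          hu0ker, Matrix.mulVec_zero, add_zero]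
      rw [← h7, h6]
    · have h4 : hammingNorm f0 = hammingNorm (fun pj : Q × T => x0 pj.1 * e0 pj.2) := by
        rw [hn_sum]
        have h5 : hammingNorm (f0 ∘ Sum.inr) = 0 := by
          simp [hf0, hammingNorm]
        rw [h5, add_zero]
        rfl
      have h5 : hammingNorm e0 = 1 := by
        rw [he0]
        simp only [hammingNorm, ne_eq, ite_eq_right_iff, one_ne_zero]
        rw [show (Finset.filter (fun j => ¬(j = j0 → False) ) Finset.univ) = {j0} from ?_]
        · exact Finset.card_singleton j0
        · ext j
          simp
      rw [h4, hn_tensor, hx0n, h5, Nat.mul_one]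

end Dist


end StmtAux

/-- Distance balancing an `[[n, K, d_X, d_Z]]` quantum code twice (once on each side, via
taking cocomplexes appropriately) with a classical `[t, k, d]` code with `s` independent
checks yields a quantum code on `nt² + n_X s t + n_Z t s + n s²` qubits whose dimension is
`K·k²` and whose X- and Z-distances are `d·d_X` and `d·d_Z` respectively. -/
theorem stmt19 (n nX nZ s t K dX dZ k d : ℕ)
    (HX : Matrix (Fin nX) (Fin n) (ZMod 2)) (HZ : Matrix (Fin nZ) (Fin n) (ZMod 2))
    (H : Matrix (Fin s) (Fin t) (ZMod 2))
    (hchain : HX * HZ.transpose = 0)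
    (hind : LinearIndependent (ZMod 2) (fun i : Fin s => H i))
    (hK : qdim HX HZ = K)
    (hdX : isMinWt (XLogicals HX HZ) dX)
    (hdZ : isMinWt (ZLogicals HX HZ) dZ)
    (hk : Module.finrank (ZMod 2) (LinearMap.ker H.mulVecLin) = k)
    (hd : isMinWt {v : Fin t → ZMod 2 | H.mulVec v = 0 ∧ v ≠ 0} d) :
    -- first balancing: `C' = (balHX HX H, balHZ HX HZ H)`; take the cocomplex (swap X/Z),
    -- balance again, and take the cocomplex once more:
    qdim (balHZ (balHZ HX HZ H) (balHX HX H) H) (balHX (balHZ HX HZ H) H) = K * k * k ∧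
    isMinWt (XLogicals (balHZ (balHZ HX HZ H) (balHX HX H) H) (balHX (balHZ HX HZ H) H))
      (d * dX) ∧
    isMinWt (ZLogicals (balHZ (balHZ HX HZ H) (balHX HX H) H) (balHX (balHZ HX HZ H) H))
      (d * dZ) ∧
    Fintype.card ((((Fin n × Fin t) ⊕ (Fin nX × Fin s)) × Fin t) ⊕
        (((Fin nZ × Fin t) ⊕ (Fin n × Fin s)) × Fin s)) =
      n * t * t + nX * s * t + nZ * t * s + n * s * s := by
  classical
  have hex : ∃ u : Fin t → ZMod 2, H.mulVec u = 0 ∧ u ≠ 0 := by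
    obtain ⟨u0, hu0, _⟩ := hd.2
    exact ⟨u0, hu0.1, hu0.2⟩
  -- round 1
  set A1 := balHX HX H with hA1
  set B1 := balHZ HX HZ H with hB1
  have hchain1 : A1 * B1ᵀ = 0 := StmtAux.bal_chain HX HZ H hchain
  have hchain1' : B1 * A1ᵀ = 0 := by
    have := congrArg Matrix.transpose hchain1
    rwa [Matrix.transpose_mul, Matrix.transpose_transpose, Matrix.transpose_zero] at this
  have q1 : qdim B1 A1 = K * k := by
    rw [← StmtAux.qdim_comm A1 B1 hchain1, hA1, hB1, StmtAux.bal_qdim HX HZ H hchain hind,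
      hK, hk]
  have x1 : isMinWt (XLogicals A1 B1) (d * dX) :=
    StmtAux.bal_Xdist HX HZ H hind hdX hd
  have z1 : isMinWt (ZLogicals A1 B1) dZ :=
    StmtAux.bal_Zdist HX HZ H hind hdZ hex
  -- round 2 on the co-complex (B1, A1)
  set A2 := balHX B1 H with hA2
  set B2 := balHZ B1 A1 H with hB2
  have hchain2 : A2 * B2ᵀ = 0 := StmtAux.bal_chain B1 A1 H hchain1'
  have q2 : qdim B2 A2 = K * k * k := by
    rw [← StmtAux.qdim_comm A2 B2 hchain2, hA2, hB2,
      StmtAux.bal_qdim B1 A1 H hchain1' hind, q1, hk]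
  have x2 : isMinWt (XLogicals A2 B2) (d * dZ) :=
    StmtAux.bal_Xdist B1 A1 H hind z1 hd
  have z2 : isMinWt (ZLogicals A2 B2) (d * dX) :=
    StmtAux.bal_Zdist B1 A1 H hind x1 hex
  refine ⟨q2, z2, x2, ?_⟩
  simp only [Fintype.card_sum, Fintype.card_prod, Fintype.card_fin]
  ring
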